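/- Let n ≥ 3 be odd and let G = ⟨α, τ : α^n = τ^2 = 1, τα = α^{-1}τ⟩ be the dihedral group of order 2n. Then the set of atoms over the subset {α, τ, ατ} is exactly: { α^[j] · τ^[n−j] · (ατ)^[n−j] : j ∈ [0, n] } ∪ { α^[2j−1] · τ · (ατ) : j ∈ [1, n−1] } ∪ { α^[2j] · τ^[2] : j ∈ [0, n−1] } ∪ { α^[2j] · (ατ)^[2] : j ∈ [0, n−1] }. -/

import Mathlib

namespace ProductOne

open scoped Classical

variable {G : Type*} [Group G]

/-- `S` is a product-one sequence over `G`: its terms can be ordered with product `1`. -/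
def IsProductOne (S : Multiset G) : Prop :=
  ∃ l : List G, (l : Multiset G) = S ∧ l.prod = 1

/-- `S` is an atom (a minimal product-one sequence): it is a nontrivial product-one
sequence that is not the concatenation of two nontrivial product-one sequences. -/
def IsAtomSeq (S : Multiset G) : Prop :=
  S ≠ 0 ∧ IsProductOne S ∧
    ∀ A B : Multiset G, S = A + B → IsProductOne A → IsProductOne B → A = 0 ∨ B = 0

/-- `S` is a sequence over the subset `G₀ ⊆ G`. -/
def SeqOn (G₀ : Set G) (S : Multiset G) : Prop := ∀ g ∈ S, g ∈ G₀

/-- `S` is an atom of the monoid `B(G₀)` of product-one sequences over `G₀`. -/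
def IsAtomSeqOn (G₀ : Set G) (S : Multiset G) : Prop := SeqOn G₀ S ∧ IsAtomSeq S

/-- The set of lengths `L(A)` of factorizations of `A` into atoms over `G₀`. -/
def lengthsOn (G₀ : Set G) (A : Multiset G) : Set ℕ :=
  {k | ∃ f : Multiset (Multiset G), Multiset.card f = k ∧
        (∀ U ∈ f, IsAtomSeqOn G₀ U) ∧ f.sum = A}

/-- The set of lengths `L(A)` over the whole group. -/
def lengths (A : Multiset G) : Set ℕ := lengthsOn Set.univ A

/-- The set of distances of a set `L ⊆ ℕ`. -/
def distancesOf (L : Set ℕ) : Set ℕ :=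
  {d | 0 < d ∧ ∃ a, a ∈ L ∧ a + d ∈ L ∧ ∀ b ∈ L, ¬(a < b ∧ b < a + d)}

/-- The set of distances `Δ(G₀)` of the monoid `B(G₀)`. -/
def DeltaOn (G₀ : Set G) : Set ℕ :=
  {d | ∃ A : Multiset G, SeqOn G₀ A ∧ IsProductOne A ∧ d ∈ distancesOf (lengthsOn G₀ A)}

/-- The set of distances `Δ(G)` of `B(G)`. -/
def Delta (G : Type*) [Group G] : Set ℕ := DeltaOn (Set.univ : Set G)

/-- The large Davenport constant of `G₀`: maximal length of an atom of `B(G₀)`. -/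
noncomputable def DavenportOn (G₀ : Set G) : ℕ :=
  sSup {k | ∃ S : Multiset G, IsAtomSeqOn G₀ S ∧ Multiset.card S = k}

/-- The large Davenport constant `D(G)`. -/
noncomputable def Davenport (G : Type*) [Group G] : ℕ :=
  DavenportOn (Set.univ : Set G)

/-- The small Davenport constant `d(G₀)`: maximal length of a product-one free
sequence over `G₀`. -/
noncomputable def smallDavenportOn (G₀ : Set G) : ℕ :=
  sSup {k | ∃ S : Multiset G, SeqOn G₀ S ∧ Multiset.card S = k ∧
        ∀ T : Multiset G, T ≤ S → T ≠ 0 → ¬IsProductOne T}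

/-- `Δ*(G) = {min Δ(G₀) : G₀ ⊆ G with Δ(G₀) ≠ ∅}`. -/
def DeltaStar (G : Type*) [Group G] : Set ℕ :=
  {d | ∃ G₀ : Set G, (DeltaOn G₀).Nonempty ∧ d = sInf (DeltaOn G₀)}

/-- The elasticity `ρ(L) = max L / min L` of a set of lengths (with the set of
positive elements used, and `ρ = 1` if there are none). -/
noncomputable def elasticity (L : Set ℕ) : ℚ :=
  if (L ∩ {k | 0 < k}).Nonempty then
    ((sSup (L ∩ {k | 0 < k}) : ℕ) : ℚ) / ((sInf (L ∩ {k | 0 < k}) : ℕ) : ℚ)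
  else 1

/-- The elasticity `ρ(G₀)` of the monoid `B(G₀)`. -/
noncomputable def rhoOn (G₀ : Set G) : ℝ :=
  sSup {x : ℝ | ∃ A : Multiset G, SeqOn G₀ A ∧ IsProductOne A ∧
    x = (elasticity (lengthsOn G₀ A) : ℝ)}

/-- `Δ*_ρ(G) = {min Δ(G₀) : G₀ ⊆ G with ρ(G₀) = D(G)/2}`. -/
noncomputable def DeltaRhoStar (G : Type*) [Group G] : Set ℕ :=
  {d | ∃ G₀ : Set G, rhoOn G₀ = (Davenport G : ℝ) / 2 ∧ d = sInf (DeltaOn G₀)}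

/-- Divisibility in the monoid `B(G)`. -/
def BDvd (A S : Multiset G) : Prop :=
  ∃ C : Multiset G, IsProductOne C ∧ S = A + C

/-- The `ω`-invariant `ω(B(G), A)`. -/
noncomputable def omegaAt (A : Multiset G) : ℕ∞ :=
  sInf {N : ℕ∞ | ∀ f : Multiset (Multiset G),
    (∀ B ∈ f, IsProductOne B) → BDvd A f.sum →
    ∃ t ≤ f, (Multiset.card t : ℕ∞) ≤ N ∧ BDvd A t.sum}

/-- `ω(G) = sup {ω(B(G), U) : U an atom of B(G)}`. -/
noncomputable def omegaInv (G : Type*) [Group G] : ℕ∞ :=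
  ⨆ U ∈ {U : Multiset G | IsAtomSeq U}, omegaAt U

/-- `z` is a factorization of `A` into atoms. -/
def IsFactorization (A : Multiset G) (z : Multiset (Multiset G)) : Prop :=
  (∀ U ∈ z, IsAtomSeq U) ∧ z.sum = A

/-- The distance between two factorizations. -/
noncomputable def factDist (z z' : Multiset (Multiset G)) : ℕ :=
  letI := Classical.decEq (Multiset G)
  max (Multiset.card (z - z')) (Multiset.card (z' - z))

/-- The catenary degree `c(A)`. -/
noncomputable def catenaryAt (A : Multiset G) : ℕ∞ :=
  sInf {N : ℕ∞ | ∀ z z' : Multiset (Multiset G),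
    IsFactorization A z → IsFactorization A z' →
    Relation.ReflTransGen
      (fun x y => IsFactorization A y ∧ (factDist x y : ℕ∞) ≤ N) z z'}

/-- The set of positive catenary degrees `Ca(G)`. -/
noncomputable def CatenarySet (G : Type*) [Group G] : Set ℕ∞ :=
  {c | ∃ A : Multiset G, IsProductOne A ∧ catenaryAt A = c ∧ 0 < c}

/-- The catenary degree `c(G)` of `B(G)`. -/
noncomputable def catenaryDegree (G : Type*) [Group G] : ℕ∞ :=
  ⨆ A ∈ {A : Multiset G | IsProductOne A}, catenaryAt A

/-- The cross number `k(S)` of a sequence. -/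
noncomputable def crossNumber (S : Multiset G) : ℚ :=
  (S.map fun g => (1 : ℚ) / (orderOf g : ℚ)).sum

/-- The system of sets of lengths `L(G)`. -/
def LSystem (G : Type*) [Group G] : Set (Set ℕ) :=
  {L | ∃ A : Multiset G, IsProductOne A ∧ L = lengths A}

/-- The set of products `π(S)` of all orderings of the terms of `S`. -/
def piSet (S : Multiset G) : Set G :=
  {g | ∃ l : List G, (l : Multiset G) = S ∧ l.prod = g}

/-- The sumset `{x₁, -x₁} + ⋯ + {x_s, -x_s}` for a sequence `a = x₁ ⋯ x_s`. -/
def signedSums {α : Type*} [AddCommGroup α] (a : Multiset α) : Set α :=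
  {z | ∃ t ≤ a, z = t.sum + t.sum - a.sum}

/-- `Σ_k(T)`: the set of sums of `k`-term subsequences of `T`. -/
def subseqSums {α : Type*} [AddCommMonoid α] (k : ℕ) (T : Multiset α) : Set α :=
  {z | ∃ t ≤ T, Multiset.card t = k ∧ t.sum = z}

/-- The subsequence `S_X` of all terms of `S` lying in `X`. -/
noncomputable def restrictTo (X : Set G) (S : Multiset G) : Multiset G :=
  letI := Classical.decPred fun g => g ∈ X
  S.filter fun g => g ∈ X

/-- The maximum multiplicity `h(S)` of a term of `S`. -/
noncomputable def maxMultiplicity {α : Type*} (S : Multiset α) : ℕ :=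
  letI := Classical.decEq α
  S.toFinset.sup S.count

end ProductOne

/-!
A sequence over `{α, τ, ατ}` is determined by its multiplicities `(a, b, c)`. Every ordering of
`α^[a] τ^[b] (ατ)^[c]` lifts to the infinite dihedral group `D_∞ = DihedralGroup 0`, and the product
is `1` in `D_{2n}` iff the lifted product is a rotation `r X` with `n ∣ X`. In `D_∞` such an `X`
satisfies `b + c ≡ 0` and `X ≡ a + c (mod 2)` (read off in the abelianization), and
`|X| ≤ a + min b c` (two subadditive weights); explicit orderings realise everything else. Hence the
sequence is product-one iff `b = c = 0 ∧ n ∣ a`, or `b + c` is even and positive and either `a + c`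
is even or `n ≤ a + min b c`. The atoms are the minimal nonzero triples for this additive condition:
every other triple splits off one of `(n,0,0)`, `(2n,0,0)`, `(0,2,0)`, `(0,0,2)`, `(1,1,1)` or
`(a, n-a, n-a)`.
-/

open DihedralGroup Multiset

namespace ProductOne

section Group

variable {G : Type*} [Group G]

theorem isProductOne_iff_one_mem_piSet {S : Multiset G} : IsProductOne S ↔ 1 ∈ piSet S :=
  Iff.rfl

theorem mem_piSet_singleton (g : G) : g ∈ piSet ({g} : Multiset G) :=
  ⟨[g], rfl, List.prod_singleton⟩

theorem mul_mem_piSet_add {g h : G} {A B : Multiset G} (hg : g ∈ piSet A) (hh : h ∈ piSet B) :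
    g * h ∈ piSet (A + B) := by
  obtain ⟨l, rfl, rfl⟩ := hg
  obtain ⟨m, rfl, rfl⟩ := hh
  exact ⟨l ++ m, rfl, List.prod_append⟩

theorem pow_mem_piSet_nsmul {g : G} {A : Multiset G} (hg : g ∈ piSet A) (k : ℕ) :
    g ^ k ∈ piSet (k • A) := by
  induction k with
  | zero => rw [pow_zero, zero_nsmul]; exact ⟨[], rfl, rfl⟩
  | succ k ih => rw [pow_succ, succ_nsmul]; exact mul_mem_piSet_add ih hg

theorem pow_mem_piSet_replicate (g : G) (k : ℕ) : g ^ k ∈ piSet (replicate k g) := by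
  rw [← nsmul_singleton]
  exact pow_mem_piSet_nsmul (mem_piSet_singleton g) k

theorem IsProductOne.add {A B : Multiset G} (hA : IsProductOne A) (hB : IsProductOne B) :
    IsProductOne (A + B) := by
  rw [isProductOne_iff_one_mem_piSet, ← mul_one 1]
  exact mul_mem_piSet_add hA hB

theorem isProductOne_replicate_iff {g : G} {k : ℕ} :
    IsProductOne (replicate k g) ↔ g ^ k = 1 := by
  refine ⟨?_, fun h => isProductOne_iff_one_mem_piSet.2 (h ▸ pow_mem_piSet_replicate g k)⟩
  rintro ⟨l, hl, hprod⟩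
  rw [← coe_replicate, coe_eq_coe, List.perm_replicate] at hl
  rw [← hprod, hl, List.prod_replicate]

theorem piSet_subset_image_piSet_map {H : Type*} [Group H] (f : G →* H) {σ : H → G}
    (hσ : Function.RightInverse σ f) (T : Multiset H) : piSet T ⊆ f '' piSet (T.map σ) := by
  rintro _ ⟨l, rfl, rfl⟩
  refine ⟨(l.map σ).prod, ⟨l.map σ, rfl, rfl⟩, ?_⟩
  rw [map_list_prod, List.map_map, hσ.comp_eq_id, List.map_id]

theorem map_eq_prod_map_of_mem_piSet {M : Type*} [CommMonoid M] (f : G →* M) {g : G}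
    {S : Multiset G} (hg : g ∈ piSet S) : f g = (S.map f).prod := by
  obtain ⟨l, rfl, rfl⟩ := hg
  rw [map_list_prod, map_coe, prod_coe]

theorem le_sum_map_of_mem_piSet {M : Type*} [AddCommMonoid M] [PartialOrder M]
    [IsOrderedAddMonoid M] {w : G → M} (h1 : w 1 ≤ 0) (hmul : ∀ x y, w (x * y) ≤ w x + w y)
    {g : G} {S : Multiset G} (hg : g ∈ piSet S) : w g ≤ (S.map w).sum := by
  obtain ⟨l, rfl, rfl⟩ := hg
  induction l with
  | nil => simpa using h1
  | cons x l ih => simpa using (hmul x l.prod).trans (add_le_add le_rfl ih)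

end Group

section Triple

variable {α : Type*}

theorem seqOn_add_iff {G₀ : Set α} {A B : Multiset α} :
    SeqOn G₀ (A + B) ↔ SeqOn G₀ A ∧ SeqOn G₀ B := by
  simp only [SeqOn, mem_add, or_imp, forall_and]

variable (x y z : α)

def tripleSeq (a b c : ℕ) : Multiset α :=
  replicate a x + replicate b y + replicate c z

theorem tripleSeq_add (a b c a' b' c' : ℕ) :
    tripleSeq x y z a b c + tripleSeq x y z a' b' c' =
      tripleSeq x y z (a + a') (b + b') (c + c') := by
  simp only [tripleSeq, replicate_add]
  abel

theorem tripleSeq_eq_zero_iff {a b c : ℕ} :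
    tripleSeq x y z a b c = 0 ↔ a = 0 ∧ b = 0 ∧ c = 0 := by
  rw [← card_eq_zero]
  simp only [tripleSeq, card_add, card_replicate]
  omega

theorem map_tripleSeq {β : Type*} (f : α → β) (a b c : ℕ) :
    (tripleSeq x y z a b c).map f = tripleSeq (f x) (f y) (f z) a b c := by
  simp [tripleSeq]

theorem sum_tripleSeq {M : Type*} [AddCommMonoid M] (x y z : M) (a b c : ℕ) :
    (tripleSeq x y z a b c).sum = a • x + b • y + c • z := by
  simp [tripleSeq]

theorem prod_tripleSeq {M : Type*} [CommMonoid M] (x y z : M) (a b c : ℕ) :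
    (tripleSeq x y z a b c).prod = x ^ a * y ^ b * z ^ c := by
  simp [tripleSeq]

theorem seqOn_tripleSeq (a b c : ℕ) : SeqOn {x, y, z} (tripleSeq x y z a b c) := by
  intro g hg
  simp only [tripleSeq, mem_add, mem_replicate] at hg
  grind

variable {x y z}

theorem tripleSeq_injective (hxy : x ≠ y) (hxz : x ≠ z) (hyz : y ≠ z) {a b c a' b' c' : ℕ}
    (h : tripleSeq x y z a b c = tripleSeq x y z a' b' c') : a = a' ∧ b = b' ∧ c = c' := by
  classical
  have hcount := fun g => congrArg (count g) h
  refine ⟨?_, ?_, ?_⟩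
  · simpa [tripleSeq, count_replicate, hxy.symm, hxz.symm] using hcount x
  · simpa [tripleSeq, count_replicate, hxy, hyz.symm] using hcount y
  · simpa [tripleSeq, count_replicate, hxz, hyz] using hcount z

theorem exists_eq_tripleSeq_of_seqOn (hxy : x ≠ y) (hxz : x ≠ z) (hyz : y ≠ z)
    {S : Multiset α} (hS : SeqOn {x, y, z} S) : ∃ a b c, S = tripleSeq x y z a b c := by
  classical
  refine ⟨S.count x, S.count y, S.count z, ext.2 fun g => ?_⟩
  by_cases hg : g = x ∨ g = y ∨ g = z
  · rcases hg with rfl | rfl | rfl <;> simp [tripleSeq, count_replicate, *, Ne.symm]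
  · have hgS : g ∉ S := fun h => hg (hS g h)
    simp_all [tripleSeq, count_replicate]

end Triple

end ProductOne

namespace DihedralGroup

open ProductOne

def map {m n : ℕ} (f : ZMod m →+ ZMod n) : DihedralGroup m →* DihedralGroup n where
  toFun
    | r i => r (f i)
    | sr i => sr (f i)
  map_one' := congrArg r (map_zero f)
  map_mul' := by rintro (i | i) (j | j) <;> simp [map_sub]

def toKlein {n : ℕ} (f : ZMod n →+ ZMod 2) :
    DihedralGroup n →* Multiplicative (ZMod 2 × ZMod 2) where
  toFun
    | r i => Multiplicative.ofAdd (f i, 0)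
    | sr i => Multiplicative.ofAdd (f i, 1)
  map_one' := congrArg (fun x => Multiplicative.ofAdd (x, (0 : ZMod 2))) (map_zero f)
  map_mul' := by
    rintro (i | i) (j | j) <;>
      simp [← ofAdd_add, map_sub, CharTwo.sub_eq_add, CharTwo.add_self_eq_zero, add_comm]

/-- As `ZMod 0 = ℤ`, `DihedralGroup 0` is the infinite dihedral group. -/
def liftMinAbs {n : ℕ} : DihedralGroup n → DihedralGroup 0
  | r i => r i.valMinAbs
  | sr i => sr i.valMinAbs

theorem rightInverse_liftMinAbs (n : ℕ) :
    Function.RightInverse liftMinAbs (map (m := 0) (Int.castAddHom (ZMod n))) := by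
  rintro (i | i) <;> exact congrArg _ (ZMod.coe_valMinAbs i)

/-- For `c = 0` and `c = 1` this gives `α, τ, ατ` the weights `1, 0, 1` and `1, 1, 0`. -/
def weight (c : ZMod 0) : DihedralGroup 0 → ℕ
  | r i => Int.natAbs i
  | sr i => Int.natAbs (i + c)

theorem weight_mul_le (c : ZMod 0) (g h : DihedralGroup 0) :
    weight c (g * h) ≤ weight c g + weight c h := by
  rcases g with i | i <;> rcases h with j | j <;>
    simp only [r_mul_r, r_mul_sr, sr_mul_r, sr_mul_sr, weight] <;> omega

/-- `α^[a] · τ^[b] · (ατ)^[c]`. -/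
abbrev threeSeq (n a b c : ℕ) : Multiset (DihedralGroup n) :=
  tripleSeq (r 1) (sr 0) (sr (-1)) a b c

theorem parity_and_natAbs_le_of_r_mem_piSet {X : ℤ} {a b c : ℕ}
    (h : r X ∈ piSet (threeSeq 0 a b c)) :
    (b + c) % 2 = 0 ∧ X % 2 = (a + c) % 2 ∧ X.natAbs ≤ a + min b c := by
  have hk := map_eq_prod_map_of_mem_piSet (toKlein (n := 0) (Int.castAddHom (ZMod 2))) h
  rw [map_tripleSeq, prod_tripleSeq] at hk
  change Multiplicative.ofAdd ((X : ZMod 2), (0 : ZMod 2)) =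
    Multiplicative.ofAdd (1, 0) ^ a * Multiplicative.ofAdd (0, 1) ^ b *
      Multiplicative.ofAdd (1, 1) ^ c at hk
  simp only [← ofAdd_nsmul, ← ofAdd_add, EmbeddingLike.apply_eq_iff_eq, Prod.ext_iff] at hk
  simp only [Prod.smul_mk, nsmul_eq_mul, mul_one, mul_zero, Prod.mk_add_mk, add_zero,
    zero_add] at hk
  have hX := (ZMod.intCast_eq_intCast_iff' X (a + c) 2).1 (by push_cast; exact hk.1)
  have hbc := (ZMod.natCast_eq_natCast_iff' (b + c) 0 2).1 (by push_cast; exact hk.2.symm)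
  have hw₀ := le_sum_map_of_mem_piSet le_rfl (weight_mul_le 0) h
  have hw₁ := le_sum_map_of_mem_piSet le_rfl (weight_mul_le 1) h
  rw [map_tripleSeq, sum_tripleSeq] at hw₀ hw₁
  change X.natAbs ≤ a • 1 + b • 0 + c • 1 at hw₀
  change X.natAbs ≤ a • 1 + b • 1 + c • 0 at hw₁
  simp only [smul_eq_mul, mul_one, mul_zero, add_zero] at hw₀ hw₁
  omega

theorem r_one_ne_sr {n : ℕ} (i : ZMod n) : (r 1 : DihedralGroup n) ≠ sr i := nofun

theorem sr_zero_ne_sr_neg_one {n : ℕ} (hn : 3 ≤ n) : (sr 0 : DihedralGroup n) ≠ sr (-1) := by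
  have : Fact (1 < n) := ⟨by omega⟩
  simp [eq_comm]

theorem threeSeq_map_liftMinAbs {n : ℕ} (hn : 3 ≤ n) (a b c : ℕ) :
    (threeSeq n a b c).map liftMinAbs = threeSeq 0 a b c := by
  have : NeZero n := ⟨by omega⟩
  have h₁ : (1 : ZMod n).valMinAbs = 1 := by
    rw [ZMod.valMinAbs_spec]
    refine ⟨by simp, ?_⟩
    simp only [Int.reduceMul, Set.mem_Ioc]
    omega
  have h₂ : (-1 : ZMod n).valMinAbs = -1 := by
    rw [ZMod.valMinAbs_spec]
    refine ⟨by simp, ?_⟩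
    simp only [Int.reduceNeg, Int.reduceMul, Set.mem_Ioc]
    omega
  simp only [map_tripleSeq, liftMinAbs, h₁, h₂, ZMod.valMinAbs_zero]
  rfl

section ProductOneTriple

variable {n a b c : ℕ}

def ProductOneTriple (n a b c : ℕ) : Prop :=
  (b = 0 ∧ c = 0 ∧ n ∣ a) ∨ (0 < b + c ∧ (b + c) % 2 = 0 ∧ ((a + c) % 2 = 0 ∨ n ≤ a + min b c))

theorem productOneTriple_self_zero_zero (n : ℕ) : ProductOneTriple n n 0 0 :=
  Or.inl ⟨rfl, rfl, dvd_rfl⟩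

theorem isProductOne_threeSeq_zero_zero_iff : IsProductOne (threeSeq n a 0 0) ↔ n ∣ a := by
  simp only [tripleSeq, replicate_zero, add_zero]
  rw [isProductOne_replicate_iff, ← orderOf_dvd_iff_pow_eq_one, orderOf_r_one]

theorem isProductOne_threeSeq_of_add {a₁ b₁ c₁ a₂ b₂ c₂ : ℕ}
    (h₁ : IsProductOne (threeSeq n a₁ b₁ c₁)) (h₂ : IsProductOne (threeSeq n a₂ b₂ c₂))
    (ha : a₁ + a₂ = a) (hb : b₁ + b₂ = b) (hc : c₁ + c₂ = c) :
    IsProductOne (threeSeq n a b c) := by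
  rw [← ha, ← hb, ← hc, threeSeq, ← tripleSeq_add]
  exact h₁.add h₂

theorem isProductOne_threeSeq_zero_two_mul_two_mul (s t : ℕ) :
    IsProductOne (threeSeq n 0 (2 * s) (2 * t)) := by
  have hsq : ∀ (i : ZMod n) k, IsProductOne (replicate (2 * k) (sr i)) := fun i k =>
    isProductOne_replicate_iff.2 (orderOf_dvd_iff_pow_eq_one.1 (by simp [orderOf_sr]))
  simpa [tripleSeq] using (hsq 0 s).add (hsq (-1) t)

theorem isProductOne_threeSeq_two_mul_two_zero (k : ℕ) :
    IsProductOne (threeSeq n (2 * k) 2 0) := by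
  have h := pow_mem_piSet_nsmul (mul_mem_piSet_add
    (pow_mem_piSet_replicate (r 1 : DihedralGroup n) k) (mem_piSet_singleton (sr 0))) 2
  rw [r_one_pow, r_mul_sr, sq, sr_mul_self] at h
  rw [isProductOne_iff_one_mem_piSet]
  convert h using 2
  simp only [tripleSeq, ← nsmul_singleton, two_mul, add_nsmul, zero_nsmul, nsmul_add, add_zero]
  abel

theorem isProductOne_threeSeq_two_mul_zero_two (k : ℕ) :
    IsProductOne (threeSeq n (2 * k) 0 2) := by
  have h := pow_mem_piSet_nsmul (mul_mem_piSet_add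
    (pow_mem_piSet_replicate (r 1 : DihedralGroup n) k) (mem_piSet_singleton (sr (-1)))) 2
  rw [r_one_pow, r_mul_sr, sq, sr_mul_self] at h
  rw [isProductOne_iff_one_mem_piSet]
  convert h using 2
  simp only [tripleSeq, ← nsmul_singleton, two_mul, add_nsmul, zero_nsmul, nsmul_add, add_zero]
  abel

theorem isProductOne_threeSeq_two_mul_add_one_one_one (k : ℕ) :
    IsProductOne (threeSeq n (2 * k + 1) 1 1) := by
  have h := mul_mem_piSet_add
    (mul_mem_piSet_add (pow_mem_piSet_replicate (r 1 : DihedralGroup n) (k + 1))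
      (mem_piSet_singleton (sr 0)))
    (mul_mem_piSet_add (pow_mem_piSet_replicate (r 1 : DihedralGroup n) k)
      (mem_piSet_singleton (sr (-1))))
  rw [r_one_pow, r_one_pow, r_mul_sr, r_mul_sr, sr_mul_sr,
    show (-1 - k - (0 - (k + 1 : ℕ)) : ZMod n) = 0 by push_cast; ring, r_zero] at h
  rw [isProductOne_iff_one_mem_piSet]
  convert h using 2
  simp only [tripleSeq, ← nsmul_singleton, two_mul, add_nsmul, one_nsmul]
  abel

/-- Uses `ατ · τ = α`. -/
theorem isProductOne_threeSeq_sub_sub {j : ℕ} (hj : j ≤ n) :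
    IsProductOne (threeSeq n j (n - j) (n - j)) := by
  have h := mul_mem_piSet_add (pow_mem_piSet_replicate (r 1 : DihedralGroup n) j)
    (pow_mem_piSet_nsmul (mul_mem_piSet_add (mem_piSet_singleton (sr (-1)))
      (mem_piSet_singleton (sr 0))) (n - j))
  rw [sr_mul_sr, sub_neg_eq_add, zero_add, ← pow_add, Nat.add_sub_cancel' hj, r_one_pow_n] at h
  rw [isProductOne_iff_one_mem_piSet]
  convert h using 2
  simp only [tripleSeq, ← nsmul_singleton, nsmul_add]
  abel

theorem isProductOne_threeSeq_of_even (hpos : 0 < b + c) (hbc : (b + c) % 2 = 0)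
    (hac : (a + c) % 2 = 0) : IsProductOne (threeSeq n a b c) := by
  obtain ⟨k, rfl | rfl⟩ : ∃ k, a = 2 * k ∨ a = 2 * k + 1 := ⟨a / 2, by omega⟩
  · rcases Nat.eq_zero_or_pos b with rfl | hb
    · exact isProductOne_threeSeq_of_add (isProductOne_threeSeq_two_mul_zero_two k)
        (isProductOne_threeSeq_zero_two_mul_two_mul 0 ((c - 2) / 2)) (by omega) rfl (by omega)
    · exact isProductOne_threeSeq_of_add (isProductOne_threeSeq_two_mul_two_zero k)
        (isProductOne_threeSeq_zero_two_mul_two_mul ((b - 2) / 2) (c / 2)) (by omega) (by omega)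
        (by omega)
  · exact isProductOne_threeSeq_of_add (isProductOne_threeSeq_two_mul_add_one_one_one k)
      (isProductOne_threeSeq_zero_two_mul_two_mul ((b - 1) / 2) ((c - 1) / 2)) (by omega)
      (by omega) (by omega)

theorem isProductOne_threeSeq_of_productOneTriple (hodd : n % 2 = 1)
    (h : ProductOneTriple n a b c) : IsProductOne (threeSeq n a b c) := by
  rcases h with ⟨rfl, rfl, hdvd⟩ | ⟨hpos, hbc, hac | hlarge⟩
  · exact isProductOne_threeSeq_zero_zero_iff.2 hdvd
  · exact isProductOne_threeSeq_of_even hpos hbc hac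
  by_cases hac : (a + c) % 2 = 0
  · exact isProductOne_threeSeq_of_even hpos hbc hac
  rcases le_or_gt n a with ha | ha
  · exact isProductOne_threeSeq_of_add (isProductOne_threeSeq_zero_zero_iff.2 dvd_rfl)
      (isProductOne_threeSeq_of_even (a := a - n) hpos hbc (by omega)) (by omega) (zero_add b)
      (zero_add c)
  · exact isProductOne_threeSeq_of_add (isProductOne_threeSeq_sub_sub ha.le)
      (isProductOne_threeSeq_zero_two_mul_two_mul ((b - (n - a)) / 2) ((c - (n - a)) / 2))
      (add_zero a) (by omega) (by omega)

theorem productOneTriple_of_isProductOne (hn : 3 ≤ n) (h : IsProductOne (threeSeq n a b c)) :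
    ProductOneTriple n a b c := by
  rcases Nat.eq_zero_or_pos (b + c) with hbc | hpos
  · obtain ⟨rfl, rfl⟩ : b = 0 ∧ c = 0 := by omega
    exact Or.inl ⟨rfl, rfl, isProductOne_threeSeq_zero_zero_iff.1 h⟩
  obtain ⟨g, hg, hg1⟩ := piSet_subset_image_piSet_map _ (rightInverse_liftMinAbs n) _
    (isProductOne_iff_one_mem_piSet.1 h)
  rw [threeSeq_map_liftMinAbs hn] at hg
  obtain ⟨X, rfl⟩ : ∃ X : ℤ, g = r X := by
    rcases g with X | X
    · exact ⟨X, rfl⟩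
    · exact absurd hg1 nofun
  obtain ⟨hbc, hX, hle⟩ := parity_and_natAbs_le_of_r_mem_piSet hg
  have hdvd : n ∣ X.natAbs :=
    Int.natCast_dvd.1 ((ZMod.intCast_zmod_eq_zero_iff_dvd X n).1 (r.inj hg1))
  refine Or.inr ⟨hpos, hbc, or_iff_not_imp_left.2 fun hac => ?_⟩
  have := Nat.le_of_dvd (Int.natAbs_pos.2 (by omega)) hdvd
  omega

theorem isProductOne_threeSeq_iff (hn : 3 ≤ n) (hodd : n % 2 = 1) :
    IsProductOne (threeSeq n a b c) ↔ ProductOneTriple n a b c :=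
  ⟨productOneTriple_of_isProductOne hn, isProductOne_threeSeq_of_productOneTriple hodd⟩

def AtomTriple (n a b c : ℕ) : Prop :=
  ProductOneTriple n a b c ∧ 0 < a + b + c ∧
    ∀ a₁ b₁ c₁ a₂ b₂ c₂, a₁ + a₂ = a → b₁ + b₂ = b → c₁ + c₂ = c →
      ProductOneTriple n a₁ b₁ c₁ → ProductOneTriple n a₂ b₂ c₂ →
        a₁ + b₁ + c₁ = 0 ∨ a₂ + b₂ + c₂ = 0

theorem isAtomSeqOn_threeSeq_iff (hn : 3 ≤ n) (hodd : n % 2 = 1) :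
    IsAtomSeqOn {r 1, sr 0, sr (-1)} (threeSeq n a b c) ↔ AtomTriple n a b c := by
  have hyz := sr_zero_ne_sr_neg_one hn
  simp only [IsAtomSeqOn, IsAtomSeq, AtomTriple, isProductOne_threeSeq_iff hn hodd, ne_eq,
    tripleSeq_eq_zero_iff]
  constructor
  · rintro ⟨-, hne, hpo, hmin⟩
    refine ⟨hpo, by omega, fun a₁ b₁ c₁ a₂ b₂ c₂ ha hb hc h₁ h₂ => ?_⟩
    have := hmin (threeSeq n a₁ b₁ c₁) (threeSeq n a₂ b₂ c₂)
      (by rw [threeSeq, tripleSeq_add, ha, hb, hc])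
      ((isProductOne_threeSeq_iff hn hodd).2 h₁) ((isProductOne_threeSeq_iff hn hodd).2 h₂)
    simp only [tripleSeq_eq_zero_iff] at this
    omega
  · rintro ⟨hpo, hpos, hmin⟩
    refine ⟨seqOn_tripleSeq _ _ _ a b c, by omega, hpo, fun A B hAB hA hB => ?_⟩
    obtain ⟨hsA, hsB⟩ := seqOn_add_iff.1
      (show SeqOn {r 1, sr 0, sr (-1)} (A + B) from hAB ▸ seqOn_tripleSeq _ _ _ a b c)
    obtain ⟨a₁, b₁, c₁, rfl⟩ :=
      exists_eq_tripleSeq_of_seqOn (r_one_ne_sr 0) (r_one_ne_sr (-1)) hyz hsA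
    obtain ⟨a₂, b₂, c₂, rfl⟩ :=
      exists_eq_tripleSeq_of_seqOn (r_one_ne_sr 0) (r_one_ne_sr (-1)) hyz hsB
    rw [tripleSeq_add] at hAB
    obtain ⟨ha, hb, hc⟩ := tripleSeq_injective (r_one_ne_sr 0) (r_one_ne_sr (-1)) hyz hAB
    have := hmin a₁ b₁ c₁ a₂ b₂ c₂ ha.symm hb.symm hc.symm
      ((isProductOne_threeSeq_iff hn hodd).1 hA) ((isProductOne_threeSeq_iff hn hodd).1 hB)
    simp only [tripleSeq_eq_zero_iff]
    omega

def ListedTriple (n a b c : ℕ) : Prop :=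
  (a ≤ n ∧ b = n - a ∧ c = n - a) ∨ (a % 2 = 1 ∧ a ≤ 2 * n - 3 ∧ b = 1 ∧ c = 1) ∨
    (a % 2 = 0 ∧ a ≤ 2 * n - 2 ∧ b = 2 ∧ c = 0) ∨ (a % 2 = 0 ∧ a ≤ 2 * n - 2 ∧ b = 0 ∧ c = 2)

theorem ProductOneTriple.rotation_cases (h : ProductOneTriple n a b c) :
    (b = 0 ∧ c = 0 ∧ (a = 0 ∨ a = n ∨ 2 * n ≤ a)) ∨
      (0 < b + c ∧ (b + c) % 2 = 0 ∧ ((a + c) % 2 = 0 ∨ n ≤ a + min b c)) := by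
  refine h.imp (fun ⟨hb, hc, hdvd⟩ => ⟨hb, hc, ?_⟩) id
  obtain ⟨k, rfl⟩ := hdvd
  rcases k with _ | _ | k
  · simp
  · simp
  · right; right; nlinarith

theorem atomTriple_of_listedTriple (hn : 3 ≤ n) (hodd : n % 2 = 1) (h : ListedTriple n a b c) :
    AtomTriple n a b c := by
  unfold ListedTriple at h
  refine ⟨?_, by omega, fun a₁ b₁ c₁ a₂ b₂ c₂ ha hb hc h₁ h₂ => ?_⟩
  · by_cases hbc : b = 0 ∧ c = 0
    · exact Or.inl ⟨hbc.1, hbc.2, (show a = n by omega) ▸ dvd_rfl⟩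
    · exact Or.inr (by omega)
  · have := h₁.rotation_cases
    have := h₂.rotation_cases
    omega

theorem AtomTriple.not_split (h : AtomTriple n a b c) {a₁ b₁ c₁ : ℕ}
    (h₁ : ProductOneTriple n a₁ b₁ c₁) (h₂ : ProductOneTriple n (a - a₁) (b - b₁) (c - c₁))
    (ha : a₁ ≤ a) (hb : b₁ ≤ b) (hc : c₁ ≤ c) (hpos : 0 < a₁ + b₁ + c₁)
    (hlt : a₁ + b₁ + c₁ < a + b + c) : False := by
  have := h.2.2 a₁ b₁ c₁ (a - a₁) (b - b₁) (c - c₁) (by omega) (by omega) (by omega) h₁ h₂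
  omega

theorem listedTriple_of_atomTriple_of_even (hn : 3 ≤ n) (hodd : n % 2 = 1)
    (h : AtomTriple n a b c) (hpos : 0 < b + c) (hbc : (b + c) % 2 = 0) (hac : (a + c) % 2 = 0) :
    ListedTriple n a b c := by
  unfold ListedTriple
  by_cases hc : c % 2 = 0
  · by_cases hb2 : 2 ≤ b ∧ 4 ≤ b + c
    · refine (h.not_split (a₁ := 0) (b₁ := 2) (c₁ := 0) (Or.inr ?_) (Or.inr ?_) ?_ ?_ ?_ ?_
        ?_).elim <;> omega
    by_cases hc2 : 2 ≤ c ∧ 4 ≤ b + c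
    · refine (h.not_split (a₁ := 0) (b₁ := 0) (c₁ := 2) (Or.inr ?_) (Or.inr ?_) ?_ ?_ ?_ ?_
        ?_).elim <;> omega
    by_cases ha : 2 * n ≤ a
    · refine (h.not_split (Or.inl ⟨rfl, rfl, dvd_mul_left n 2⟩) (Or.inr ?_) ha ?_ ?_ ?_
        ?_).elim <;> omega
    by_cases hc0 : c = 0
    · exact Or.inr (Or.inr (Or.inl (by omega)))
    · exact Or.inr (Or.inr (Or.inr (by omega)))
  · by_cases hbc4 : 4 ≤ b + c
    · refine (h.not_split (a₁ := 1) (b₁ := 1) (c₁ := 1) (Or.inr ?_) (Or.inr ?_) ?_ ?_ ?_ ?_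
        ?_).elim <;> omega
    by_cases ha : 2 * n - 1 ≤ a
    · refine (h.not_split (productOneTriple_self_zero_zero n) (Or.inr ?_) ?_ ?_ ?_ ?_
        ?_).elim <;> omega
    exact Or.inr (Or.inl (by omega))

theorem listedTriple_of_atomTriple (hn : 3 ≤ n) (hodd : n % 2 = 1) (h : AtomTriple n a b c) :
    ListedTriple n a b c := by
  rcases h.1 with ⟨rfl, rfl, hdvd⟩ | ⟨hpos, hbc, hlarge⟩
  · have := Nat.le_of_dvd (by have := h.2.1; omega) hdvd
    by_cases ha : a = n
    · exact Or.inl (by omega)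
    refine (h.not_split (productOneTriple_self_zero_zero n)
      (Or.inl ⟨rfl, rfl, Nat.dvd_sub hdvd dvd_rfl⟩) ?_ ?_ ?_ ?_ ?_).elim <;> omega
  by_cases hac : (a + c) % 2 = 0
  · exact listedTriple_of_atomTriple_of_even hn hodd h hpos hbc hac
  replace hlarge : n ≤ a + min b c := hlarge.resolve_left hac
  unfold ListedTriple
  by_cases ha : n ≤ a
  · refine (h.not_split (productOneTriple_self_zero_zero n) (Or.inr ?_) ha ?_ ?_ ?_
      ?_).elim <;> omega
  by_cases hcb : c < b
  · refine (h.not_split (a₁ := 0) (b₁ := 2) (c₁ := 0) (Or.inr ?_) (Or.inr ?_) ?_ ?_ ?_ ?_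
      ?_).elim <;> omega
  by_cases hbc : b < c
  · refine (h.not_split (a₁ := 0) (b₁ := 0) (c₁ := 2) (Or.inr ?_) (Or.inr ?_) ?_ ?_ ?_ ?_
      ?_).elim <;> omega
  by_cases hb : b = n - a
  · exact Or.inl (by omega)
  refine (h.not_split (a₁ := a) (b₁ := n - a) (c₁ := n - a) (Or.inr ?_) (Or.inr ?_) ?_ ?_ ?_ ?_
    ?_).elim <;> omega

theorem atomTriple_iff_listedTriple (hn : 3 ≤ n) (hodd : n % 2 = 1) :
    AtomTriple n a b c ↔ ListedTriple n a b c :=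
  ⟨listedTriple_of_atomTriple hn hodd, atomTriple_of_listedTriple hn hodd⟩

end ProductOneTriple

end DihedralGroup

open ProductOne DihedralGroup in
/-- Let `n ≥ 3` be odd. The atoms of `B({α, τ, ατ})` in the dihedral
group `D_{2n}` (with `α = r 1`, `τ = sr 0`, `ατ = sr (-1)`) are exactly the listed
sequences. -/
theorem atoms_over_three_elements (n : ℕ) (hn : 3 ≤ n) (hodd : Odd n) :
    {S : Multiset (DihedralGroup n) |
        IsAtomSeqOn {DihedralGroup.r 1, DihedralGroup.sr 0, DihedralGroup.sr (-1)} S} =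
      {S | ∃ j : ℕ, j ≤ n ∧ S =
          Multiset.replicate j (DihedralGroup.r 1) +
          Multiset.replicate (n - j) (DihedralGroup.sr 0) +
          Multiset.replicate (n - j) (DihedralGroup.sr (-1))} ∪
      {S | ∃ j : ℕ, 1 ≤ j ∧ j ≤ n - 1 ∧ S =
          Multiset.replicate (2 * j - 1) (DihedralGroup.r 1) +
          Multiset.replicate 1 (DihedralGroup.sr 0) +
          Multiset.replicate 1 (DihedralGroup.sr (-1))} ∪
      {S | ∃ j : ℕ, j ≤ n - 1 ∧ S =
          Multiset.replicate (2 * j) (DihedralGroup.r 1) +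
          Multiset.replicate 2 (DihedralGroup.sr 0)} ∪
      {S | ∃ j : ℕ, j ≤ n - 1 ∧ S =
          Multiset.replicate (2 * j) (DihedralGroup.r 1) +
          Multiset.replicate 2 (DihedralGroup.sr (-1))} := by
  replace hodd := Nat.odd_iff.1 hodd
  have hiff : ∀ a b c, IsAtomSeqOn {r 1, sr 0, sr (-1)} (threeSeq n a b c) ↔ ListedTriple n a b c :=
    fun a b c => (isAtomSeqOn_threeSeq_iff hn hodd).trans (atomTriple_iff_listedTriple hn hodd)
  ext S
  simp only [Set.mem_ofPred_eq, Set.mem_union]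
  constructor
  · intro h
    obtain ⟨a, b, c, rfl⟩ := exists_eq_tripleSeq_of_seqOn (r_one_ne_sr 0) (r_one_ne_sr (-1))
      (sr_zero_ne_sr_neg_one hn) h.1
    rcases (hiff a b c).1 h with ⟨ha, rfl, rfl⟩ | ⟨ha, ha', rfl, rfl⟩ | ⟨ha, ha', rfl, rfl⟩ |
      ⟨ha, ha', rfl, rfl⟩
    · exact Or.inl (Or.inl (Or.inl ⟨a, ha, rfl⟩))
    · exact Or.inl (Or.inl (Or.inr ⟨(a + 1) / 2, by omega, by omega, by
        rw [show 2 * ((a + 1) / 2) - 1 = a by omega]; rfl⟩))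
    · exact Or.inl (Or.inr ⟨a / 2, by omega, by simp [tripleSeq, show 2 * (a / 2) = a by omega]⟩)
    · exact Or.inr ⟨a / 2, by omega, by simp [tripleSeq, show 2 * (a / 2) = a by omega]⟩
  · rintro (((⟨j, hj, rfl⟩ | ⟨j, hj, hj', rfl⟩) | ⟨j, hj, rfl⟩) | ⟨j, hj, rfl⟩)
    · exact (hiff j (n - j) (n - j)).2 (Or.inl ⟨hj, rfl, rfl⟩)
    · exact (hiff (2 * j - 1) 1 1).2 (Or.inr (Or.inl (by omega)))
    · simpa [tripleSeq] using (hiff (2 * j) 2 0).2 (Or.inr (Or.inr (Or.inl (by omega))))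
    · simpa [tripleSeq] using (hiff (2 * j) 0 2).2 (Or.inr (Or.inr (Or.inr (by omega))))
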